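/- Let A be the 16×32 real matrix whose sixteen rows, acting on w = (w_0,…,w_31) ∈ ℝ^32, compute w_1+w_10−w_17−w_26, w_2+w_4−w_23−w_25, w_7+w_9−w_18−w_20, w_11+w_14−w_27−w_30, w_0+w_22−w_0−w_21, w_3+w_29−w_8−w_28, w_3+w_29−w_15−w_30, w_22+w_26−w_23−w_25, w_17+w_21−w_18−w_20, w_8+w_28−w_15−w_27, w_6+w_16−w_5−w_16, w_13+w_19−w_12−w_24, w_13+w_19−w_14−w_31, w_6+w_10−w_7−w_9, w_1+w_5−w_2−w_4, and w_12+w_24−w_11−w_31. Then A has full row rank 16, A𝟙 = 0 for the all-ones vector 𝟙, and for every b ∈ ℝ^16 there exists w ∈ ℝ^32 with A w = b and w_i ≥ 0 for all i. -/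
import Mathlib


/-- The length-equalization system matrix for the genus-2 (6-corner region) cutgraph pattern. -/
def Amat : Matrix (Fin 16) (Fin 32) ℝ :=
  Matrix.of ![![0,1,0,0,0,0,0,0,0,0,1,0,0,0,0,0,0,-1,0,0,0,0,0,0,0,0,-1,0,0,0,0,0],
    ![0,0,1,0,1,0,0,0,0,0,0,0,0,0,0,0,0,0,0,0,0,0,0,-1,0,-1,0,0,0,0,0,0],
    ![0,0,0,0,0,0,0,1,0,1,0,0,0,0,0,0,0,0,-1,0,-1,0,0,0,0,0,0,0,0,0,0,0],
    ![0,0,0,0,0,0,0,0,0,0,0,1,0,0,1,0,0,0,0,0,0,0,0,0,0,0,0,-1,0,0,-1,0],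
    ![0,0,0,0,0,0,0,0,0,0,0,0,0,0,0,0,0,0,0,0,0,-1,1,0,0,0,0,0,0,0,0,0],
    ![0,0,0,1,0,0,0,0,-1,0,0,0,0,0,0,0,0,0,0,0,0,0,0,0,0,0,0,0,-1,1,0,0],
    ![0,0,0,1,0,0,0,0,0,0,0,0,0,0,0,-1,0,0,0,0,0,0,0,0,0,0,0,0,0,1,-1,0],
    ![0,0,0,0,0,0,0,0,0,0,0,0,0,0,0,0,0,0,0,0,0,0,1,-1,0,-1,1,0,0,0,0,0],
    ![0,0,0,0,0,0,0,0,0,0,0,0,0,0,0,0,0,1,-1,0,-1,1,0,0,0,0,0,0,0,0,0,0],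
    ![0,0,0,0,0,0,0,0,1,0,0,0,0,0,0,-1,0,0,0,0,0,0,0,0,0,0,0,-1,1,0,0,0],
    ![0,0,0,0,0,-1,1,0,0,0,0,0,0,0,0,0,0,0,0,0,0,0,0,0,0,0,0,0,0,0,0,0],
    ![0,0,0,0,0,0,0,0,0,0,0,0,-1,1,0,0,0,0,0,1,0,0,0,0,-1,0,0,0,0,0,0,0],
    ![0,0,0,0,0,0,0,0,0,0,0,0,0,1,-1,0,0,0,0,1,0,0,0,0,0,0,0,0,0,0,0,-1],
    ![0,0,0,0,0,0,1,-1,0,-1,1,0,0,0,0,0,0,0,0,0,0,0,0,0,0,0,0,0,0,0,0,0],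
    ![0,1,-1,0,-1,1,0,0,0,0,0,0,0,0,0,0,0,0,0,0,0,0,0,0,0,0,0,0,0,0,0,0],
    ![0,0,0,0,0,0,0,0,0,0,0,-1,1,0,0,0,0,0,0,0,0,0,0,0,1,0,0,0,0,0,0,-1]]



/-- An explicit preimage of `b` under `Amat.mulVec`. -/
noncomputable def wvec (b : Fin 16 → ℝ) : Fin 32 → ℝ :=
  ![
    0,
    (1/2 : ℝ) * b 0 + (1/2 : ℝ) * b 1 + (-1/2 : ℝ) * b 2 + (1/2 : ℝ) * b 4 + (-1/2 : ℝ) * b 7 + (1/2 : ℝ) * b 8 + (1/2 : ℝ) * b 10 + (-1/2 : ℝ) * b 13 + (1/2 : ℝ) * b 14,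
    b 1,
    b 6,
    0,
    (-1/2 : ℝ) * b 0 + (1/2 : ℝ) * b 1 + (1/2 : ℝ) * b 2 + (-1/2 : ℝ) * b 4 + (1/2 : ℝ) * b 7 + (-1/2 : ℝ) * b 8 + (-1/2 : ℝ) * b 10 + (1/2 : ℝ) * b 13 + (1/2 : ℝ) * b 14,
    (-1/2 : ℝ) * b 0 + (1/2 : ℝ) * b 1 + (1/2 : ℝ) * b 2 + (-1/2 : ℝ) * b 4 + (1/2 : ℝ) * b 7 + (-1/2 : ℝ) * b 8 + (1/2 : ℝ) * b 10 + (1/2 : ℝ) * b 13 + (1/2 : ℝ) * b 14,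
    b 2,
    -b 5 + b 6,
    0,
    (1/2 : ℝ) * b 0 + (-1/2 : ℝ) * b 1 + (1/2 : ℝ) * b 2 + (1/2 : ℝ) * b 4 + (-1/2 : ℝ) * b 7 + (1/2 : ℝ) * b 8 + (-1/2 : ℝ) * b 10 + (1/2 : ℝ) * b 13 + (-1/2 : ℝ) * b 14,
    (1/2 : ℝ) * b 3 + (-1/2 : ℝ) * b 5 + (1/2 : ℝ) * b 6 + (-1/2 : ℝ) * b 9 + (-1/2 : ℝ) * b 11 + (1/2 : ℝ) * b 12 + (-1/2 : ℝ) * b 15,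
    (1/2 : ℝ) * b 3 + (-1/2 : ℝ) * b 5 + (1/2 : ℝ) * b 6 + (-1/2 : ℝ) * b 9 + (-1/2 : ℝ) * b 11 + (1/2 : ℝ) * b 12 + (1/2 : ℝ) * b 15,
    (1/2 : ℝ) * b 3 + (-1/2 : ℝ) * b 5 + (1/2 : ℝ) * b 6 + (-1/2 : ℝ) * b 9 + (1/2 : ℝ) * b 11 + (1/2 : ℝ) * b 12 + (1/2 : ℝ) * b 15,
    (1/2 : ℝ) * b 3 + (-1/2 : ℝ) * b 5 + (1/2 : ℝ) * b 6 + (-1/2 : ℝ) * b 9 + (1/2 : ℝ) * b 11 + (-1/2 : ℝ) * b 12 + (1/2 : ℝ) * b 15,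
    0,
    0,
    b 4 + -b 7 + b 8,
    0,
    0,
    0,
    -b 4 + b 7,
    b 7,
    0,
    0,
    0,
    0,
    -b 5 + b 6 + -b 9,
    0,
    0,
    0,
    0]

set_option maxHeartbeats 4000000 in
lemma Aw (b : Fin 16 → ℝ) : Amat.mulVec (wvec b) = b := by
  funext i
  fin_cases i
  all_goals norm_num [Amat, wvec, Matrix.mulVec, dotProduct, Fin.sum_univ_succ,
    Matrix.vecHead, Matrix.vecTail]
  all_goals try ring_nf
  all_goals rfl

set_option maxHeartbeats 1000000 in
lemma A_ones : Amat.mulVec (fun _ => 1) = 0 := by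
  funext i
  fin_cases i <;>
    norm_num [Amat, Matrix.mulVec, dotProduct, Fin.sum_univ_succ,
      Matrix.vecHead, Matrix.vecTail]

lemma A_surj : Function.Surjective Amat.mulVec := fun b => ⟨wvec b, Aw b⟩

/-- The matrix has full row rank 16, the all-ones vector lies in its kernel, and
the system `A w = b` has a non-negative solution for every right-hand side `b`. -/
theorem equalizable :
    Amat.rank = 16 ∧ Amat.mulVec (fun _ => 1) = 0 ∧
    ∀ b : Fin 16 → ℝ, ∃ w : Fin 32 → ℝ, Amat.mulVec w = b ∧ ∀ i, 0 ≤ w i := by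
  refine ⟨?_, A_ones, ?_⟩
  · have h : LinearMap.range Amat.mulVecLin = ⊤ :=
      LinearMap.range_eq_top.mpr A_surj
    rw [Matrix.rank, h]
    simp
  · intro b
    set w0 := wvec b with hw0
    set c : ℝ := ∑ j, |w0 j| with hc
    refine ⟨fun j => w0 j + c, ?_, ?_⟩
    · have heq : (fun j => w0 j + c) = w0 + c • (fun _ => (1:ℝ)) := by
        funext j; simp [mul_comm]
      rw [heq, Matrix.mulVec_add, Matrix.mulVec_smul, A_ones, Aw]
      simp
    · intro i
      have h1 : |w0 i| ≤ c :=
        Finset.single_le_sum (f := fun j => |w0 j|) (fun j _ => abs_nonneg _)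
          (Finset.mem_univ i)
      have h2 := neg_abs_le (w0 i)
      dsimp only
      linarith
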